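/- Let V be a finite-dimensional real inner product space, S : V → V self-adjoint with smallest eigenvalue η₂ ≥ 0 on a subspace on which ω is supported, and ω ∈ Λ^p V an eigenform of S^{[p]} with S^{[p]}ω = μω. If (fᵢ) is an orthonormal eigenbasis of S, then Σᵢ ⟨ι_{fᵢ}ω, ι_{S²(fᵢ)}ω⟩ ≥ η₂ μ |ω|², where η₂ is the smallest eigenvalue of S among directions fᵢ with ι_{fᵢ}ω ≠ 0. -/

import Mathlib

noncomputable section
open Finset

/-- `m`-dimensional Euclidean space. -/
abbrev E (m : ℕ) := EuclideanSpace ℝ (Fin m)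

/-- standard orthonormal basis vector -/
def sb (m : ℕ) (i : Fin m) : E m := EuclideanSpace.single i 1

/-- the induced inner product on `p`-forms (computed via the standard basis) -/
def rInner (m p : ℕ) (f g : (Fin p → E m) → ℝ) : ℝ :=
  (Nat.factorial p : ℝ)⁻¹ *
    ∑ σ : Fin p → Fin m, f (fun k => sb m (σ k)) * g (fun k => sb m (σ k))

/-- the induced norm on `p`-forms -/
def rNorm (m p : ℕ) (f : (Fin p → E m) → ℝ) : ℝ := Real.sqrt (rInner m p f f)

/-- the derivation extension `S^{[p]}` of an endomorphism `S` to `p`-forms: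
`S^{[p]}ω(X₁,…,X_p) = Σᵢ ω(X₁,…,S Xᵢ,…,X_p)` -/
def sder (m : ℕ) (S : E m →ₗ[ℝ] E m) (p : ℕ) (f : (Fin p → E m) → ℝ) :
    (Fin p → E m) → ℝ :=
  fun X => ∑ i : Fin p, f (Function.update X i (S (X i)))

/-- interior product of a vector with a `(p+1)`-form -/
def iprod (m p : ℕ) (v : E m) (f : (Fin (p+1) → E m) → ℝ) : (Fin p → E m) → ℝ :=
  fun Y => f (Fin.cons v Y)

/-- wedge of a vector (via the metric) with a `p`-form -/
def wedgeV (m p : ℕ) (v : E m) (f : (Fin p → E m) → ℝ) : (Fin (p+1) → E m) → ℝ :=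
  fun Y => ∑ i : Fin (p+1),
    (-1 : ℝ) ^ (i : ℕ) * (inner ℝ v (Y i) : ℝ) * f (fun k => Y (i.succAbove k))

/-- interior product of the `s`-vector `X₁ ∧ ⋯ ∧ X_s` with an `(s+t)`-form:
`(Y₁,…,Y_t) ↦ ω(X_s,…,X₁,Y₁,…,Y_t)` -/
def iprodMulti (m s t : ℕ) (X : Fin s → E m) (f : (Fin (s+t) → E m) → ℝ) :
    (Fin t → E m) → ℝ :=
  fun Y => f (Fin.append (fun k => X k.rev) Y)

/-- wedge `X₁ ∧ ⋯ ∧ X_s ∧ ψ` of an `s`-tuple of vectors (via the metric) with a `t`-form -/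
def wedgeMulti (m s t : ℕ) (X : Fin s → E m) (f : (Fin t → E m) → ℝ) :
    (Fin (s+t) → E m) → ℝ :=
  fun Y => ((Nat.factorial s * Nat.factorial t : ℕ) : ℝ)⁻¹ *
    ∑ σ : Equiv.Perm (Fin (s+t)),
      ((Equiv.Perm.sign σ : ℤ) : ℝ) *
        Matrix.det (Matrix.of fun i j : Fin s =>
          (inner ℝ (X i) (Y (σ (Fin.castAdd t j))) : ℝ)) *
        f (fun k => Y (σ (Fin.natAdd s k)))

/-! Write `B(u, v) = ⟨ι_u ω, ι_v ω⟩` and `λᵢ` for the eigenvalues of `S`. The sum `Σᵢ B(S fᵢ, fᵢ)`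
is the trace of a bilinear form, so it may be computed in the standard basis instead; there the
alternation of `ω` makes each of the `p + 1` terms of `⟨S^{[p+1]}ω, ω⟩` equal to the one with `S` in
the first slot, whence `Σᵢ λᵢ |ι_{fᵢ}ω|² = ⟨S^{[p+1]}ω, ω⟩ = μ |ω|²`. Termwise
`λᵢ² |ι_{fᵢ}ω|² ≥ η₂ λᵢ |ι_{fᵢ}ω|²`, because either `ι_{fᵢ}ω = 0` or `0 ≤ η₂ ≤ λᵢ`. -/

open scoped RealInnerProductSpace

theorem OrthonormalBasis.sum_bilin_apply_self_eq {ι ι' F : Type*} [Fintype ι] [Fintype ι']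
    [NormedAddCommGroup F] [InnerProductSpace ℝ F] (B : F →ₗ[ℝ] F →ₗ[ℝ] ℝ)
    (b : OrthonormalBasis ι ℝ F) (b' : OrthonormalBasis ι' ℝ F) :
    ∑ i, B (b i) (b i) = ∑ j, B (b' j) (b' j) :=
  calc ∑ i, B (b i) (b i) = ∑ i, ∑ j, ⟪b' j, b i⟫ * B (b i) (b' j) := by
        refine sum_congr rfl fun i _ => ?_
        rw [← congrArg (B (b i)) (b'.sum_repr' (b i))]
        simp only [map_sum, map_smul, smul_eq_mul]
    _ = ∑ j, B (∑ i, ⟪b i, b' j⟫ • b i) (b' j) := by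
        rw [sum_comm]
        simp only [map_sum, map_smul, LinearMap.sum_apply, LinearMap.smul_apply, smul_eq_mul,
          real_inner_comm]
    _ = ∑ j, B (b' j) (b' j) := by simp only [b.sum_repr']

theorem AlternatingMap.sum_map_update_mul_map_eq {R M κ ι : Type*} [CommRing R]
    [AddCommGroup M] [Module R M] [Fintype κ] [DecidableEq κ] [Fintype ι]
    (ω : M [⋀^κ]→ₗ[R] R) (v : ι → M) (F : M → M) (i j : κ) :
    ∑ σ : κ → ι, ω (Function.update (v ∘ σ) i (F (v (σ i)))) * ω (v ∘ σ) =
      ∑ σ : κ → ι, ω (Function.update (v ∘ σ) j (F (v (σ j)))) * ω (v ∘ σ) := by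
  rcases eq_or_ne i j with rfl | hij
  · rfl
  -- reindexing by the transposition `i ↔ j` flips the sign of both factors
  refine Fintype.sum_equiv (Equiv.arrowCongr (Equiv.swap i j) (Equiv.refl ι)) _ _ fun σ => ?_
  have hσ : Equiv.arrowCongr (Equiv.swap i j) (Equiv.refl ι) σ = σ ∘ Equiv.swap i j := by
    ext; simp [Equiv.arrowCongr_apply]
  have hupd : Function.update (v ∘ σ ∘ Equiv.swap i j) j (F (v ((σ ∘ Equiv.swap i j) j))) =
      Function.update (v ∘ σ) i (F (v (σ i))) ∘ Equiv.swap i j := by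
    rw [← Function.comp_assoc, Function.update_comp_equiv]
    simp
  rw [hσ, hupd, ← Function.comp_assoc, ω.map_swap _ hij, ω.map_swap _ hij, neg_mul_neg]

theorem rInner_self_nonneg (m p : ℕ) (g : (Fin p → E m) → ℝ) : 0 ≤ rInner m p g g :=
  mul_nonneg (by positivity) (sum_nonneg fun _ _ => mul_self_nonneg _)

def rInnerₗ (m p : ℕ) : ((Fin p → E m) → ℝ) →ₗ[ℝ] ((Fin p → E m) → ℝ) →ₗ[ℝ] ℝ :=
  LinearMap.mk₂ ℝ (rInner m p)
    (fun g₁ g₂ h => by simp only [rInner, Pi.add_apply, add_mul, sum_add_distrib, mul_add])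
    (fun c g h => by simp only [rInner, Pi.smul_apply, smul_eq_mul, mul_assoc, ← mul_sum]; ring)
    (fun g h₁ h₂ => by simp only [rInner, Pi.add_apply, mul_add, sum_add_distrib])
    (fun c g h => by simp only [rInner, Pi.smul_apply, smul_eq_mul, mul_left_comm _ c, ← mul_sum])

def iprodₗ (m p : ℕ) (ω : E m [⋀^Fin (p+1)]→ₗ[ℝ] ℝ) : E m →ₗ[ℝ] (Fin p → E m) → ℝ where
  toFun v := iprod m p v ω
  map_add' u v := congrArg DFunLike.coe (ω.curryLeft.map_add u v)
  map_smul' c v := congrArg DFunLike.coe (ω.curryLeft.map_smul c v)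

def contractionForm (m p : ℕ) (ω : E m [⋀^Fin (p+1)]→ₗ[ℝ] ℝ) : E m →ₗ[ℝ] E m →ₗ[ℝ] ℝ :=
  (rInnerₗ m p).compl₁₂ (iprodₗ m p ω) (iprodₗ m p ω)

theorem contractionForm_apply (m p : ℕ) (ω : E m [⋀^Fin (p+1)]→ₗ[ℝ] ℝ) (u v : E m) :
    contractionForm m p ω u v = rInner m p (iprod m p u ω) (iprod m p v ω) :=
  rfl

theorem Fin.sum_univ_pi_succ {α β : Type*} [Fintype α] [AddCommMonoid β] {n : ℕ}
    (F : (Fin (n+1) → α) → β) :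
    ∑ σ, F σ = ∑ a, ∑ τ : Fin n → α, F (Fin.cons a τ) := by
  rw [← Fintype.sum_prod_type']
  exact (Fintype.sum_equiv (Fin.consEquiv fun _ => α) _ _ fun _ => rfl).symm

theorem rInner_sder_self (m p : ℕ) (S : E m →ₗ[ℝ] E m) (ω : E m [⋀^Fin (p+1)]→ₗ[ℝ] ℝ) :
    rInner m (p+1) (sder m S (p+1) ω) ω = ∑ k, contractionForm m p ω (S (sb m k)) (sb m k) := by
  have hslot : ∀ i, ∑ σ : Fin (p+1) → Fin m,
      ω (Function.update (sb m ∘ σ) i (S (sb m (σ i)))) * ω (sb m ∘ σ) =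
      p.factorial * ∑ k, contractionForm m p ω (S (sb m k)) (sb m k) := by
    intro i
    rw [ω.sum_map_update_mul_map_eq _ _ i 0, Fin.sum_univ_pi_succ, mul_sum]
    refine sum_congr rfl fun k _ => ?_
    have hcons : ∀ τ : Fin p → Fin m, sb m ∘ Fin.cons k τ = Fin.cons (sb m k) (sb m ∘ τ) := by
      intro τ; ext j : 1; cases j using Fin.cases <;> rfl
    simp only [hcons, Fin.update_cons_zero, Fin.cons_zero, contractionForm_apply, rInner, iprod]
    field_simp
    rfl
  simp only [rInner, sder, sum_mul]
  rw [sum_comm]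
  simp only [Function.comp_def] at hslot
  simp only [hslot, sum_const, card_univ, Fintype.card_fin, nsmul_eq_mul, Nat.factorial_succ]
  push_cast
  field_simp

theorem sum_contractions_S_sq_ge_general (m p : ℕ) (S : E m →ₗ[ℝ] E m)
    (f : OrthonormalBasis (Fin m) ℝ (E m)) (μeig : Fin m → ℝ)
    (heig : ∀ i, S (f i) = μeig i • f i)
    (ω : (E m) [⋀^Fin (p+1)]→ₗ[ℝ] ℝ) (μ : ℝ)
    (hω : ∀ X, sder m S (p+1) ⇑ω X = μ * ω X)
    (η₂ : ℝ) (hη₂ : 0 ≤ η₂)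
    (hmin : ∀ i, iprod m p (f i) ⇑ω ≠ 0 → η₂ ≤ μeig i) :
    η₂ * μ * rInner m (p+1) ⇑ω ⇑ω ≤
      ∑ i : Fin m, rInner m p (iprod m p (f i) ⇑ω) (iprod m p (S (S (f i))) ⇑ω) := by
  set B := contractionForm m p ω
  have htrace : ∑ i, μeig i * B (f i) (f i) = μ * rInner m (p+1) ω ω :=
    calc ∑ i, μeig i * B (f i) (f i) = ∑ i, (B ∘ₗ S) (f i) (f i) := by
          simp [heig]
      _ = ∑ k, (B ∘ₗ S) (sb m k) (sb m k) := by
          simpa [EuclideanSpace.basisFun_apply, sb] using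
            f.sum_bilin_apply_self_eq (B ∘ₗ S) (EuclideanSpace.basisFun (Fin m) ℝ)
      _ = rInner m (p+1) (sder m S (p+1) ω) ω := (rInner_sder_self m p S ω).symm
      _ = μ * rInner m (p+1) ω ω := by
          rw [funext hω]
          exact (rInnerₗ m (p+1)).map_smul₂ μ ω ω
  have hterm : ∀ i, η₂ * (μeig i * B (f i) (f i)) ≤ B (f i) (S (S (f i))) := by
    intro i
    rw [heig, map_smul, heig, map_smul, map_smul, smul_eq_mul, smul_eq_mul]
    by_cases hz : iprod m p (f i) ω = 0
    · simp [B, contractionForm_apply, hz, rInner]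
    · have hηi := hmin i hz
      exact mul_le_mul_of_nonneg_right hηi
        (mul_nonneg (hη₂.trans hηi) (rInner_self_nonneg m p (iprod m p (f i) ω)))
  calc η₂ * μ * rInner m (p+1) ω ω = ∑ i, η₂ * (μeig i * B (f i) (f i)) := by
        rw [← mul_sum, htrace, mul_assoc]
    _ ≤ _ := sum_le_sum fun i _ => hterm i

/-- if `S` is self-adjoint with orthonormal eigenbasis `(fᵢ)`
(eigenvalues `μeig i`), `ω` is an eigenform of `S^{[p]}` with eigenvalue `μ`, and
`η₂ ≥ 0` is a lower bound for the eigenvalues of `S` in those directions `fᵢ` with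
`ι_{fᵢ}ω ≠ 0`, then `Σᵢ ⟨ι_{fᵢ}ω, ι_{S²fᵢ}ω⟩ ≥ η₂ μ |ω|²`. -/
theorem sum_contractions_S_sq_ge (m p : ℕ) (S : E m →ₗ[ℝ] E m)
    (hSsym : ∀ x y : E m, (inner ℝ (S x) y : ℝ) = inner ℝ x (S y))
    (f : OrthonormalBasis (Fin m) ℝ (E m)) (μeig : Fin m → ℝ)
    (heig : ∀ i, S (f i) = μeig i • f i)
    (ω : (E m) [⋀^Fin (p+1)]→ₗ[ℝ] ℝ) (μ : ℝ)
    (hω : ∀ X, sder m S (p+1) ⇑ω X = μ * ω X)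
    (η₂ : ℝ) (hη₂ : 0 ≤ η₂)
    (hmin : ∀ i, iprod m p (f i) ⇑ω ≠ 0 → η₂ ≤ μeig i) :
    η₂ * μ * rInner m (p+1) ⇑ω ⇑ω ≤
      ∑ i : Fin m, rInner m p (iprod m p (f i) ⇑ω) (iprod m p (S (S (f i))) ⇑ω) :=
  sum_contractions_S_sq_ge_general m p S f μeig heig ω μ hω η₂ hη₂ hmin
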